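/- arXiv:0812.0089 — 2 statements merged into one kernel-verified Lean document; each statement's English description precedes it below -/
import Mathlib

section
/- Let α ≥ 0 be a real number, let σ₁, …, σₙ be complex numbers with |σᵢ| < 1/2 for every i, and let c₁, …, cₙ be complex numbers. Then the sum Σᵢ Σⱼ conj(cᵢ)·cⱼ·exp(−α·log(1 − 4·conj(σᵢ)·σⱼ)) is a nonnegative real number, i.e. the kernel (σ, ρ) ↦ exp(−α·log(1 − 4·conj(σ)·ρ)) = (1 − 4·conj(σ)·ρ)^{−α} is positive semidefinite on the open disk {z ∈ ℂ : |z| < 1/2}. -/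
/-!
By the binomial series, `exp (-α log (1 - w)) = (1 - w)^(-α) = ∑ₖ bₖ wᵏ` for `‖w‖ < 1`, with
`bₖ = Ring.multichoose α k = (α)ₖ / k! ≥ 0`. Writing `4 conj σ ρ = conj (2σ) (2ρ)`, the kernel becomes
`∑ₖ bₖ conj ((2σ)ᵏ) (2ρ)ᵏ`, a convergent nonnegative combination of rank-one kernels; its quadratic
form is `∑ₖ bₖ |∑ⱼ cⱼ (2σⱼ)ᵏ|² ≥ 0`.
-/

open Finset ComplexOrder

lemma Polynomial.ascPochhammer_eval_nonneg {S : Type*} [CommSemiring S] [PartialOrder S]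
    [IsOrderedRing S] {s : S} (hs : 0 ≤ s) (n : ℕ) : 0 ≤ (ascPochhammer S n).eval s := by
  induction n with
  | zero => simp
  | succ n ih => rw [ascPochhammer_succ_eval]; positivity

lemma Ring.multichoose_nonneg {α : ℝ} (hα : 0 ≤ α) (n : ℕ) : 0 ≤ Ring.multichoose α n := by
  have h := factorial_nsmul_multichoose_eq_ascPochhammer α n
  rw [Polynomial.ascPochhammer_smeval_eq_eval, nsmul_eq_mul] at h
  have := Polynomial.ascPochhammer_eval_nonneg hα n
  rw [← h] at this
  exact (mul_nonneg_iff_of_pos_left (by positivity)).mp this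

lemma Complex.hasSum_exp_neg_mul_log_one_sub (a : ℂ) {w : ℂ} (hw : ‖w‖ < 1) :
    HasSum (fun n ↦ Ring.multichoose a n * w ^ n) (exp (-a * log (1 - w))) := by
  have h1w : 1 - w ≠ 0 := sub_ne_zero.mpr (by rintro rfl; simp at hw)
  have hw' : w ∈ Metric.eball (0 : ℂ) 1 := by
    rw [← ENNReal.ofReal_one, Metric.eball_ofReal]; simpa using hw
  have := (one_div_one_sub_cpow_hasFPowerSeriesOnBall_zero a).hasSum hw'
  simp only [FormalMultilinearSeries.ofScalars_apply_eq, zero_add, smul_eq_mul] at this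
  simpa [Ring.multichoose_eq, cpow_def_of_ne_zero h1w, ← Complex.exp_neg, mul_comm] using this

lemma Complex.hasSum_kernel {σ ρ : ℂ} (hσ : ‖σ‖ < 1 / 2) (hρ : ‖ρ‖ < 1 / 2) (α : ℝ) :
    HasSum (fun m ↦ (Ring.multichoose α m : ℝ) * (starRingEnd ℂ ((2 * σ) ^ m) * (2 * ρ) ^ m))
      (exp (-α * log (1 - 4 * starRingEnd ℂ σ * ρ))) := by
  have hw : 4 * starRingEnd ℂ σ * ρ = starRingEnd ℂ (2 * σ) * (2 * ρ) := by
    rw [map_mul, map_ofNat]; ring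
  have hw1 : ‖starRingEnd ℂ (2 * σ) * (2 * ρ)‖ < 1 := by
    rw [norm_mul, norm_conj, norm_mul, norm_mul, norm_ofNat]
    nlinarith [norm_nonneg σ, norm_nonneg ρ]
  rw [hw]
  convert hasSum_exp_neg_mul_log_one_sub α hw1 using 2 with m
  rw [← ofRealHom_eq_coe, Ring.map_multichoose, ofRealHom_eq_coe, map_pow, ← mul_pow]

lemma Complex.sum_sum_conj_mul_nonneg_of_hasSum {ι : Type*} [Fintype ι] {b : ℕ → ℝ}
    (hb : ∀ m, 0 ≤ b m) (f : ℕ → ι → ℂ) {K : ι → ι → ℂ}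
    (hK : ∀ i j, HasSum (fun m ↦ b m * (starRingEnd ℂ (f m i) * f m j)) (K i j)) (c : ι → ℂ) :
    0 ≤ ∑ i, ∑ j, starRingEnd ℂ (c i) * c j * K i j := by
  have hsum : HasSum
      (fun m ↦ ∑ i, ∑ j, starRingEnd ℂ (c i) * c j * (b m * (starRingEnd ℂ (f m i) * f m j)))
      (∑ i, ∑ j, starRingEnd ℂ (c i) * c j * K i j) :=
    hasSum_sum fun i _ ↦ hasSum_sum fun j _ ↦ (hK i j).mul_left _
  refine hsum.nonneg fun m ↦ ?_
  have hsq : ∑ i, ∑ j, starRingEnd ℂ (c i) * c j * (b m * (starRingEnd ℂ (f m i) * f m j)) =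
      b m * (star (∑ i, c i * f m i) * ∑ j, c j * f m j) := by
    simp only [starRingEnd_apply, star_sum, star_mul']
    rw [sum_mul_sum, mul_sum]
    refine sum_congr rfl fun i _ ↦ ?_
    rw [mul_sum]
    refine sum_congr rfl fun j _ ↦ ?_
    ring
  rw [hsq]
  exact mul_nonneg (by exact_mod_cast hb m) (star_mul_self_nonneg _)

/-- The kernel `(σ, ρ) ↦ exp (-α log (1 - 4 conj σ * ρ)) = (1 - 4 conj σ * ρ)^(-α)` is
positive semidefinite on the disk `{z : |z| < 1/2}` for every `α ≥ 0`. -/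
theorem kernel_posSemidef_disk (n : ℕ) (α : ℝ) (hα : 0 ≤ α)
    (σ : Fin n → ℂ) (hσ : ∀ i, ‖σ i‖ < 1 / 2) (c : Fin n → ℂ) :
    ∃ r : ℝ, 0 ≤ r ∧
      ∑ i, ∑ j, (starRingEnd ℂ) (c i) * c j *
        Complex.exp (-(α : ℂ) * Complex.log (1 - 4 * (starRingEnd ℂ) (σ i) * σ j)) = (r : ℂ) := by
  have hK i j := Complex.hasSum_kernel (hσ i) (hσ j) α
  obtain ⟨r, hr, h⟩ := RCLike.nonneg_iff_exists_ofReal.mp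
    (Complex.sum_sum_conj_mul_nonneg_of_hasSum (Ring.multichoose_nonneg hα) _ hK c)
  exact ⟨r, hr, h.symm⟩
end

section
/- Let c > 0 and let f : ℝ^d → ℂ be a measurable function in L²(ℝ^d) with |f(t)| ≤ b almost everywhere for some constant b < 1/2. Let (fₙ) be a sequence of simple functions with |fₙ(t)| ≤ |f(t)| for all t and fₙ → f in L²(ℝ^d). Then exp(−(c/2)·∫_{ℝ^d} Real.log(1 − 4|fₙ(t)|²) dt) → exp(−(c/2)·∫_{ℝ^d} Real.log(1 − 4|f(t)|²) dt) as n → ∞. -/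
/-!
Pointwise, `‖fₙ‖ ≤ ‖f‖ ≤ b < 1/2` and the mean value bound for `log (1 - 4x)` on `[0, 4b²]` give
`|log (1 - 4‖fₙ‖²) - log (1 - 4‖f‖²)| ≤ 4 / (1 - 4b²) · (‖f‖² - ‖fₙ‖²)`. Since the right-hand side
is nonnegative, integrating bounds the difference of the integrals by
`4 / (1 - 4b²) · (‖f‖₂² - ‖fₙ‖₂²)`, which tends to `0` because `fₙ → f` in L².
-/

open MeasureTheory Filter Topology

lemma Real.abs_log_one_sub_four_mul_sq_sub_le {x y b : ℝ} (hy : 0 ≤ y) (hyx : y ≤ x) (hxb : x ≤ b)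
    (hb : b < 1 / 2) :
    |Real.log (1 - 4 * y ^ 2) - Real.log (1 - 4 * x ^ 2)| ≤
      4 / (1 - 4 * b ^ 2) * (x ^ 2 - y ^ 2) := by
  have hδ : 0 < 1 - 4 * b ^ 2 := by nlinarith
  have hx : 0 < 1 - 4 * x ^ 2 := by nlinarith
  have hxy : 1 - 4 * x ^ 2 ≤ 1 - 4 * y ^ 2 := by nlinarith
  rw [abs_of_nonneg (sub_nonneg.2 (Real.log_le_log hx hxy)), ← Real.log_div (by linarith) hx.ne']
  calc Real.log ((1 - 4 * y ^ 2) / (1 - 4 * x ^ 2))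
      ≤ (1 - 4 * y ^ 2) / (1 - 4 * x ^ 2) - 1 :=
        Real.log_le_sub_one_of_pos (div_pos (by nlinarith) hx)
    _ = 4 * (x ^ 2 - y ^ 2) / (1 - 4 * x ^ 2) := by field_simp; ring
    _ ≤ 4 * (x ^ 2 - y ^ 2) / (1 - 4 * b ^ 2) := by gcongr; nlinarith; nlinarith
    _ = _ := by ring

section
variable {α E : Type*} [MeasurableSpace α] {μ : Measure α} [NormedAddCommGroup E]

lemma sq_lpNorm_two {f : α → E} (hf : AEStronglyMeasurable f μ) :
    lpNorm f 2 μ ^ 2 = ∫ t, ‖f t‖ ^ 2 ∂μ := by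
  rw [show (2 : ENNReal) = ((2 : NNReal) : ENNReal) from rfl,
    lpNorm_nnreal_eq_integral_norm_rpow two_ne_zero hf, ← Real.rpow_mul_natCast
    (integral_nonneg fun t => by positivity)]
  norm_num

lemma tendsto_lpNorm_of_tendsto_eLpNorm_sub {ι : Type*} {l : Filter ι} {p : ENNReal}
    [Fact (1 ≤ p)]
    {s : ι → α → E} {f : α → E} (hs : ∀ n, MemLp (s n) p μ) (hf : MemLp f p μ)
    (h : Tendsto (fun n => eLpNorm (s n - f) p μ) l (𝓝 0)) :
    Tendsto (fun n => lpNorm (s n) p μ) l (𝓝 (lpNorm f p μ)) := by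
  have := ((Lp.tendsto_Lp_iff_tendsto_eLpNorm'' s hs f hf).2 h).norm
  simpa only [Lp.norm_toLp, toReal_eLpNorm (hs _).1, toReal_eLpNorm hf.1] using this

lemma integrable_log_one_sub_four_mul_norm_sq {g : α → E} {b : ℝ} (hg : MemLp g 2 μ)
    (hb : b < 1 / 2) (hgb : ∀ᵐ t ∂μ, ‖g t‖ ≤ b) :
    Integrable (fun t => Real.log (1 - 4 * ‖g t‖ ^ 2)) μ := by
  refine (((memLp_two_iff_integrable_sq_norm hg.1).1 hg).const_mul (4 / (1 - 4 * b ^ 2))).mono'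
    ?_ ?_
  · exact (Real.measurable_log.comp_aemeasurable (aemeasurable_const.sub
      ((hg.1.norm.aemeasurable.pow_const 2).const_mul 4))).aestronglyMeasurable
  filter_upwards [hgb] with t ht
  simpa using Real.abs_log_one_sub_four_mul_sq_sub_le le_rfl (norm_nonneg _) ht hb

lemma abs_integral_log_one_sub_four_mul_norm_sq_sub_le {f g : α → E} {b : ℝ} (hf : MemLp f 2 μ)
    (hg : AEStronglyMeasurable g μ) (hgf : ∀ᵐ t ∂μ, ‖g t‖ ≤ ‖f t‖) (hb : b < 1 / 2)
    (hfb : ∀ᵐ t ∂μ, ‖f t‖ ≤ b) :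
    |(∫ t, Real.log (1 - 4 * ‖g t‖ ^ 2) ∂μ) - ∫ t, Real.log (1 - 4 * ‖f t‖ ^ 2) ∂μ| ≤
      4 / (1 - 4 * b ^ 2) * ((∫ t, ‖f t‖ ^ 2 ∂μ) - ∫ t, ‖g t‖ ^ 2 ∂μ) := by
  have hg2 : MemLp g 2 μ := hf.of_le hg hgf
  have hgb : ∀ᵐ t ∂μ, ‖g t‖ ≤ b := by filter_upwards [hgf, hfb] with t h1 h2 using h1.trans h2
  have hf_sq := (memLp_two_iff_integrable_sq_norm hf.1).1 hf
  have hg_sq := (memLp_two_iff_integrable_sq_norm hg).1 hg2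
  rw [← integral_sub (integrable_log_one_sub_four_mul_norm_sq hg2 hb hgb)
    (integrable_log_one_sub_four_mul_norm_sq hf hb hfb), ← integral_sub hf_sq hg_sq,
    ← integral_const_mul, ← Real.norm_eq_abs]
  refine norm_integral_le_of_norm_le ((hf_sq.sub hg_sq).const_mul (4 / (1 - 4 * b ^ 2))) ?_
  filter_upwards [hgf, hfb] with t h1 h2
  exact Real.abs_log_one_sub_four_mul_sq_sub_le (norm_nonneg _) h1 h2 hb

lemma tendsto_integral_log_one_sub_four_mul_norm_sq {s : ℕ → α → E} {f : α → E} {b : ℝ}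
    (hf : MemLp f 2 μ) (hs : ∀ n, AEStronglyMeasurable (s n) μ)
    (hsf : ∀ n, ∀ᵐ t ∂μ, ‖s n t‖ ≤ ‖f t‖) (hb : b < 1 / 2) (hfb : ∀ᵐ t ∂μ, ‖f t‖ ≤ b)
    (hconv : Tendsto (fun n => eLpNorm (s n - f) 2 μ) atTop (𝓝 0)) :
    Tendsto (fun n => ∫ t, Real.log (1 - 4 * ‖s n t‖ ^ 2) ∂μ) atTop
      (𝓝 (∫ t, Real.log (1 - 4 * ‖f t‖ ^ 2) ∂μ)) := by
  have hs2 n : MemLp (s n) 2 μ := hf.of_le (hs n) (hsf n)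
  have hnorm : Tendsto (fun n => ∫ t, ‖s n t‖ ^ 2 ∂μ) atTop (𝓝 (∫ t, ‖f t‖ ^ 2 ∂μ)) := by
    simpa only [sq_lpNorm_two (hs _), sq_lpNorm_two hf.1] using
      (tendsto_lpNorm_of_tendsto_eLpNorm_sub hs2 hf hconv).pow 2
  have hbound : Tendsto (fun n => 4 / (1 - 4 * b ^ 2) *
      ((∫ t, ‖f t‖ ^ 2 ∂μ) - ∫ t, ‖s n t‖ ^ 2 ∂μ)) atTop (𝓝 0) := by
    have := ((tendsto_const_nhds (x := ∫ t, ‖f t‖ ^ 2 ∂μ)).sub hnorm).const_mul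
      (4 / (1 - 4 * b ^ 2))
    rwa [sub_self, mul_zero] at this
  rw [tendsto_iff_dist_tendsto_zero]
  exact squeeze_zero (fun n => dist_nonneg) (fun n =>
    abs_integral_log_one_sub_four_mul_norm_sq_sub_le hf (hs n) (hsf n) hb hfb) hbound
end

theorem tendsto_exp_vector_norms_general (d : ℕ) (c : ℝ)
    (f : (Fin d → ℝ) → ℂ) (hf2 : MemLp f 2 volume)
    (b : ℝ) (hb : b < 1 / 2) (hfb : ∀ᵐ t ∂volume, ‖f t‖ ≤ b)
    (s : ℕ → SimpleFunc (Fin d → ℝ) ℂ)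
    (hbd : ∀ n, ∀ t, ‖s n t‖ ≤ ‖f t‖)
    (hconv : Tendsto (fun n => eLpNorm (fun t => s n t - f t) 2 volume) atTop (𝓝 0)) :
    Tendsto (fun n => Real.exp (-(c / 2) * ∫ t, Real.log (1 - 4 * ‖s n t‖ ^ 2))) atTop
      (𝓝 (Real.exp (-(c / 2) * ∫ t, Real.log (1 - 4 * ‖f t‖ ^ 2)))) :=
  (Real.continuous_exp.tendsto _).comp <|
    (tendsto_integral_log_one_sub_four_mul_norm_sq hf2 (fun n => (s n).aestronglyMeasurable)
      (fun n => ae_of_all _ (hbd n)) hb hfb hconv).const_mul _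

/-- If simple functions `fₙ` satisfy `|fₙ| ≤ |f|` pointwise and `fₙ → f` in L², with
`f ∈ L²` and `|f| ≤ b < 1/2` a.e., then the squared norms of the quadratic exponential
vectors converge: `exp (-(c/2) ∫ log (1 - 4 |fₙ|²)) → exp (-(c/2) ∫ log (1 - 4 |f|²))`. -/
theorem tendsto_exp_vector_norms (d : ℕ) (c : ℝ) (hc : 0 < c)
    (f : (Fin d → ℝ) → ℂ) (hf : Measurable f) (hf2 : MemLp f 2 volume)
    (b : ℝ) (hb : b < 1 / 2) (hfb : ∀ᵐ t ∂volume, ‖f t‖ ≤ b)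
    (s : ℕ → SimpleFunc (Fin d → ℝ) ℂ)
    (hbd : ∀ n, ∀ t, ‖s n t‖ ≤ ‖f t‖)
    (hconv : Tendsto (fun n => eLpNorm (fun t => s n t - f t) 2 volume) atTop (𝓝 0)) :
    Tendsto (fun n => Real.exp (-(c / 2) * ∫ t, Real.log (1 - 4 * ‖s n t‖ ^ 2))) atTop
      (𝓝 (Real.exp (-(c / 2) * ∫ t, Real.log (1 - 4 * ‖f t‖ ^ 2)))) :=
  tendsto_exp_vector_norms_general d c f hf2 b hb hfb s hbd hconv
end
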